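/- arXiv:0812.1542 — 2 statements merged into one kernel-verified Lean document; each statement's English description precedes it below -/
import Mathlib

section
/- Let G be a connected graph with maximum degree Δ ≥ 3. Then the chromatic number of G^{2/4} (the square of the 4-subdivision of G) equals Δ + 1. -/
open SimpleGraph

/-- The `m`-th power of a graph `G`: two distinct vertices are adjacent iff
their distance in `G` is at most `m` (and they are connected). -/
def SimpleGraph.power {V : Type*} (G : SimpleGraph V) (m : ℕ) : SimpleGraph V where
  Adj x y := x ≠ y ∧ G.Reachable x y ∧ G.dist x y ≤ m
  symm := ⟨fun x y => by
    rintro ⟨h1, h2, h3⟩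
    exact ⟨h1.symm, h2.symm, by rwa [SimpleGraph.dist_comm]⟩⟩
  loopless := ⟨fun x => by simp⟩

/-- The `n`-subdivision of a graph `G`: every edge is replaced by a path of
length `n`.  Terminal vertices are `Sum.inl` vertices; each edge `e` carries
`n - 1` internal vertices `Sum.inr (e, i)`, `i : Fin (n-1)`, ordered along a
fixed orientation of `e`. -/
def SimpleGraph.subdivision {V : Type*} (G : SimpleGraph V) (n : ℕ) :
    SimpleGraph (V ⊕ (G.edgeSet × Fin (n - 1))) where
  Adj x y :=
    match x, y with
    | Sum.inl u, Sum.inl v => n = 1 ∧ G.Adj u v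
    | Sum.inl u, Sum.inr (e, i) =>
        (u = (Quot.out e.1).1 ∧ (i : ℕ) = 0) ∨
        (u = (Quot.out e.1).2 ∧ (i : ℕ) = n - 2)
    | Sum.inr (e, i), Sum.inl v =>
        (v = (Quot.out e.1).1 ∧ (i : ℕ) = 0) ∨
        (v = (Quot.out e.1).2 ∧ (i : ℕ) = n - 2)
    | Sum.inr (e, i), Sum.inr (f, j) =>
        e = f ∧ ((i : ℕ) + 1 = (j : ℕ) ∨ (j : ℕ) + 1 = (i : ℕ))
  symm := ⟨fun x y => by
    rcases x with u | ⟨e, i⟩ <;> rcases y with v | ⟨f, j⟩ <;>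
      simp only [] <;> intro h
    · exact ⟨h.1, h.2.symm⟩
    · exact h
    · exact h
    · obtain ⟨rfl, h2⟩ := h; exact ⟨rfl, h2.symm⟩⟩
  loopless := ⟨fun x => by
    rcases x with u | ⟨e, i⟩ <;> simp only []
    · rintro ⟨-, h⟩; exact G.loopless.irrefl u h
    · rintro ⟨-, h | h⟩ <;> omega⟩


/-!
Write `Δ` for the maximum degree. The closed neighbourhood of a vertex `v` of degree `Δ` in the
4-subdivision is a clique of size `Δ + 1` in its square, which gives the lower bound.

For the upper bound, the 2-subdivision of `G` is bipartite with maximum degree `Δ`, so by König's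
edge colouring theorem (proved by the usual Kempe chain argument) its edges can be properly
coloured with `Δ` colours. An edge of the 2-subdivision is an incidence of a vertex with an edge
of `G`. Colour the original vertices `0`, give the subdivision vertex next to the end `v` of `e`
the colour of the incidence `(v, e)` shifted by one, and give the middle vertex of `e` a colour
different from `0` and from the colours of its two neighbours; this needs `Δ + 1 ≥ 4`.
-/

lemma injective_vecThree {α : Type*} {x y z : α} (hxy : x ≠ y) (hxz : x ≠ z) (hyz : y ≠ z) :
    Function.Injective ![x, y, z] := by
  intro i j h
  fin_cases i <;> fin_cases j <;> simp_all [eq_comm]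

lemma Sym2.mk_out {α : Type*} (z : Sym2 α) : s((Quot.out z).1, (Quot.out z).2) = z :=
  Quot.out_eq z

namespace SimpleGraph

variable {V κ : Type*}

section Power

variable {H : SimpleGraph V}

lemma power_two_adj {x y : V} :
    (H.power 2).Adj x y ↔ x ≠ y ∧ (H.Adj x y ∨ ∃ z, H.Adj x z ∧ H.Adj z y) := by
  constructor
  · rintro ⟨hne, hr, hd⟩
    obtain ⟨p, hp⟩ := hr.exists_walk_length_eq_dist
    refine ⟨hne, ?_⟩
    match p, hp with
    | .nil, _ => exact absurd rfl hne
    | .cons h .nil, _ => exact Or.inl h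
    | .cons h (.cons h' .nil), _ => exact Or.inr ⟨_, h, h'⟩
    | .cons _ (.cons _ (.cons _ _)), hp => simp only [Walk.length_cons] at hp; omega
  · rintro ⟨hne, h | ⟨z, h₁, h₂⟩⟩
    · exact ⟨hne, h.reachable, (H.dist_le (.cons h .nil)).trans (by simp)⟩
    · exact ⟨hne, (h₁.reachable.trans h₂.reachable),
        (H.dist_le (.cons h₁ (.cons h₂ .nil))).trans (by simp)⟩

lemma isClique_insert_neighborSet_power_two (z : V) :
    (H.power 2).IsClique (insert z (H.neighborSet z)) := by
  rintro x hx y hy hxy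
  refine power_two_adj.2 ⟨hxy, ?_⟩
  rcases hx with rfl | hx <;> rcases hy with rfl | hy
  · exact absurd rfl hxy
  · exact Or.inl hy
  · exact Or.inl hx.symm
  · exact Or.inr ⟨z, hx.symm, hy⟩

end Power

lemma IsClique.ncard_le_chromaticNumber {G : SimpleGraph V} {s : Set V} (h : G.IsClique s) :
    (s.ncard : ℕ∞) ≤ G.chromaticNumber :=
  le_chromaticNumber_of_pairwise_adj (Nat.card_coe_set_eq s).ge Subtype.val
    fun x y hxy => h x.2 y.2 (Subtype.val_injective.ne hxy)

lemma ncard_neighborSet_eq_degree (G : SimpleGraph V) [Fintype V] [DecidableRel G.Adj] (v : V) :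
    (G.neighborSet v).ncard = G.degree v := by
  rw [Set.ncard_eq_toFinset_card', ← card_neighborFinset_eq_degree]
  rfl

section EdgeColoring

variable (G : SimpleGraph V) (c : Sym2 V → κ)

def IsEdgeColoring : Prop :=
  ∀ ⦃a b b'⦄, G.Adj a b → G.Adj a b' → b ≠ b' → c s(a, b) ≠ c s(a, b')

def IsFreeAt (γ : κ) (u : V) : Prop :=
  ∀ ⦃b⦄, G.Adj u b → c s(u, b) ≠ γ

def kempeGraph (α β : κ) : SimpleGraph V :=
  G ⊓ fromEdgeSet {e | c e = α ∨ c e = β}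

open Classical in
noncomputable def kempeSwap [DecidableEq κ] (α β : κ) (S : Set V) : Sym2 V → κ := fun e =>
  if ∃ x ∈ e, x ∈ S then Equiv.swap α β (c e) else c e

variable {G c} {α β γ : κ} {u v : V}

@[simp]
lemma kempeGraph_adj {x y : V} :
    (G.kempeGraph c α β).Adj x y ↔ G.Adj x y ∧ (c s(x, y) = α ∨ c s(x, y) = β) := by
  simp only [kempeGraph, inf_adj, fromEdgeSet_adj, Set.mem_ofPred_eq]
  exact ⟨fun h => ⟨h.1, h.2.1⟩, fun h => ⟨h.1, h.2, h.1.ne⟩⟩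

open Classical in
lemma kempeSwap_mk [DecidableEq κ] (S : Set V) (a b : V) :
    kempeSwap c α β S s(a, b) =
      if a ∈ S ∨ b ∈ S then Equiv.swap α β (c s(a, b)) else c s(a, b) := by
  simp [kempeSwap]

lemma exists_isFreeAt [Finite V] {k : ℕ} (c : Sym2 V → Fin k)
    (hu : (G.neighborSet u).ncard < k) : ∃ γ, G.IsFreeAt c γ u := by
  by_contra! h
  simp only [IsFreeAt, not_forall, not_not] at h
  have hsurj : (fun b => c s(u, b)) '' G.neighborSet u = Set.univ :=
    Set.eq_univ_of_forall fun γ => by simpa using h γ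
  have := Set.ncard_image_le (f := fun b => c s(u, b)) (Set.toFinite (G.neighborSet u))
  rw [hsurj, Set.ncard_univ, Nat.card_eq_fintype_card, Fintype.card_fin] at this
  omega

lemma isEdgeColoring_kempeSwap [DecidableEq κ] (hc : G.IsEdgeColoring c) {S : Set V}
    (hS : ∀ ⦃x y⦄, (G.kempeGraph c α β).Adj x y → x ∈ S → y ∈ S) :
    G.IsEdgeColoring (kempeSwap c α β S) := by
  have key : ∀ ⦃a b b'⦄, G.Adj a b → G.Adj a b' → b ≠ b' → a ∈ S ∨ b ∈ S →
      ¬(a ∈ S ∨ b' ∈ S) → Equiv.swap α β (c s(a, b)) ≠ c s(a, b') := by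
    intro a b b' hab hab' hbb hin hout
    have hb : b ∈ S := hin.resolve_left fun ha => hout (Or.inl ha)
    have hcol : ¬(c s(b, a) = α ∨ c s(b, a) = β) := fun h =>
      hout (Or.inl (hS (kempeGraph_adj.2 ⟨hab.symm, h⟩) hb))
    rw [Sym2.eq_swap, not_or] at hcol
    rw [Equiv.swap_apply_of_ne_of_ne hcol.1 hcol.2]
    exact hc hab hab' hbb
  intro a b b' hab hab' hbb
  rw [kempeSwap_mk, kempeSwap_mk]
  by_cases h : a ∈ S ∨ b ∈ S <;> by_cases h' : a ∈ S ∨ b' ∈ S <;>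
    simp only [h, h', if_true, if_false]
  · exact (Equiv.injective _).ne (hc hab hab' hbb)
  · exact key hab hab' hbb h h'
  · exact (key hab' hab hbb.symm h' h).symm
  · exact hc hab hab' hbb

lemma IsEdgeColoring.kempeGraph_color_of_isPath (C : G.Coloring (Fin 2))
    (hc : G.IsEdgeColoring c) (hu : G.IsFreeAt c α u) {x w : V}
    (h : (G.kempeGraph c α β).Adj x w) (p : (G.kempeGraph c α β).Walk w u)
    (hp : (Walk.cons h p).IsPath) : c s(x, w) = if C x = C u then α else β := by
  induction p generalizing x with
  | nil =>
    rw [if_neg (C.valid (kempeGraph_adj.1 h).1)]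
    refine (kempeGraph_adj.1 h).2.resolve_left fun hα => hu (kempeGraph_adj.1 h).1.symm ?_
    rwa [Sym2.eq_swap]
  | @cons w w₂ u h' q ih =>
    have hw := ih hu h' hp.of_cons
    have hxw₂ : x ≠ w₂ := fun hx => (Walk.cons_isPath_iff _ _).1 hp |>.2 (by simp [hx])
    -- `xw` and `ww₂` carry the two different colours `α`, `β`, and `x`, `w₂` are on the same side
    have hne : c s(x, w) ≠ c s(w, w₂) := by
      rw [Sym2.eq_swap]
      exact hc (kempeGraph_adj.1 h).1.symm (kempeGraph_adj.1 h').1 hxw₂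
    have hxw := C.valid (kempeGraph_adj.1 h).1
    have hww₂ := C.valid (kempeGraph_adj.1 h').1
    rw [hw] at hne
    rcases (kempeGraph_adj.1 h).2 with hcol | hcol <;> rw [hcol] at hne ⊢ <;>
      split_ifs at hne ⊢ <;> first | rfl | omega | exact absurd rfl hne

lemma IsEdgeColoring.not_reachable_kempeGraph (C : G.Coloring (Fin 2))
    (hc : G.IsEdgeColoring c) (huv : C u ≠ C v) (hu : G.IsFreeAt c α u)
    (hv : G.IsFreeAt c β v) : ¬(G.kempeGraph c α β).Reachable v u := by
  intro hr
  obtain ⟨p, hp⟩ := hr.exists_isPath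
  cases p with
  | nil => exact huv rfl
  | cons h q =>
    have hcol := hc.kempeGraph_color_of_isPath C hu h q hp
    rw [if_neg huv.symm] at hcol
    exact hv (kempeGraph_adj.1 h).1 hcol

lemma IsEdgeColoring.exists_isFreeAt_isFreeAt [DecidableEq κ] (C : G.Coloring (Fin 2))
    (hc : G.IsEdgeColoring c) (huv : C u ≠ C v) (hu : G.IsFreeAt c α u)
    (hv : G.IsFreeAt c β v) :
    ∃ c' : Sym2 V → κ, G.IsEdgeColoring c' ∧ G.IsFreeAt c' β u ∧ G.IsFreeAt c' β v := by
  set S := {x | (G.kempeGraph c α β).Reachable u x}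
  have hvS : v ∉ S := fun h => hc.not_reachable_kempeGraph C huv hu hv h.symm
  refine ⟨kempeSwap c α β S,
    isEdgeColoring_kempeSwap hc fun x y hxy hx => hx.trans hxy.reachable, ?_, ?_⟩
  · intro b hb
    have huS : u ∈ S := Reachable.refl u
    rw [kempeSwap_mk, if_pos (Or.inl huS), Ne, Equiv.swap_apply_eq_iff, Equiv.swap_apply_right]
    exact hu hb
  · intro b hb
    rw [kempeSwap_mk]
    split_ifs with hS
    · rw [Ne, Equiv.swap_apply_eq_iff, Equiv.swap_apply_right]
      intro hα
      have hvb : (G.kempeGraph c α β).Adj b v := by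
        rw [kempeGraph_adj, Sym2.eq_swap]
        exact ⟨hb.symm, Or.inl hα⟩
      exact hvS ((hS.resolve_left hvS).trans hvb.reachable)
    · exact hv hb

lemma IsEdgeColoring.update_deleteEdges [DecidableEq V]
    (hc : (G.deleteEdges {s(u, v)}).IsEdgeColoring c)
    (hu : (G.deleteEdges {s(u, v)}).IsFreeAt c γ u)
    (hv : (G.deleteEdges {s(u, v)}).IsFreeAt c γ v) :
    G.IsEdgeColoring (Function.update c s(u, v) γ) := by
  have key : ∀ ⦃a b b'⦄, G.Adj a b → G.Adj a b' → b ≠ b' → s(a, b) = s(u, v) →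
      γ ≠ Function.update c s(u, v) γ s(a, b') := by
    intro a b b' _ hab' hbb he
    have he' : s(a, b') ≠ s(u, v) := fun h => hbb (Sym2.congr_right.1 (he.trans h.symm))
    have hadj : (G.deleteEdges {s(u, v)}).Adj a b' := by simp [hab', he']
    rw [Function.update_of_ne he']
    rcases Sym2.mem_iff.1 (he ▸ Sym2.mem_mk_left a b) with rfl | rfl
    · exact (hu hadj).symm
    · exact (hv hadj).symm
  intro a b b' hab hab' hbb
  by_cases he : s(a, b) = s(u, v)
  · rw [he, Function.update_self]
    exact key hab hab' hbb he
  by_cases he' : s(a, b') = s(u, v)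
  · rw [he', Function.update_self]
    exact (key hab' hab hbb.symm he').symm
  rw [Function.update_of_ne he, Function.update_of_ne he']
  exact hc (by simp [hab, he]) (by simp [hab', he']) hbb

lemma ncard_neighborSet_deleteEdges_lt [Finite V] (h : G.Adj u v) :
    ((G.deleteEdges {s(u, v)}).neighborSet u).ncard < (G.neighborSet u).ncard := by
  refine Set.ncard_lt_ncard ⟨neighborSet_mono (deleteEdges_le _) u, fun hsub => ?_⟩
  simpa using hsub h

theorem exists_isEdgeColoring_of_isBipartite [Finite V] {k : ℕ} [NeZero k]
    (hG : G.IsBipartite) (hk : ∀ v, (G.neighborSet v).ncard ≤ k) :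
    ∃ c : Sym2 V → Fin k, G.IsEdgeColoring c := by
  classical
  induction hn : G.edgeSet.ncard using Nat.strong_induction_on generalizing G with
  | _ n ih =>
  obtain ⟨C⟩ := hG
  rcases G.edgeSet.eq_empty_or_nonempty with hE | ⟨e, he⟩
  · exact ⟨fun _ => 0, fun a b _ hab =>
    (Set.notMem_empty _ (hE ▸ hab : s(a, b) ∈ (∅ : Set _))).elim⟩
  induction e using Sym2.ind with | _ u v =>
  rw [mem_edgeSet] at he
  have hHG : G.deleteEdges {s(u, v)} ≤ G := deleteEdges_le _
  have hlt : (G.deleteEdges {s(u, v)}).edgeSet.ncard < n := by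
    rw [edgeSet_deleteEdges, ← hn]
    exact Set.ncard_sdiff_singleton_lt_of_mem he
  obtain ⟨c, hc⟩ := ih _ hlt ⟨C.comp (Hom.ofLE hHG)⟩
    (fun w => (Set.ncard_le_ncard (neighborSet_mono hHG w)).trans (hk w)) rfl
  obtain ⟨α, hα⟩ := exists_isFreeAt c ((ncard_neighborSet_deleteEdges_lt he).trans_le (hk u))
  obtain ⟨β, hβ⟩ := exists_isFreeAt (G := G.deleteEdges {s(u, v)}) c (u := v) <| by
    rw [Sym2.eq_swap]
    exact (ncard_neighborSet_deleteEdges_lt he.symm).trans_le (hk v)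
  obtain ⟨c', hc', hu, hv⟩ :=
    hc.exists_isFreeAt_isFreeAt (C.comp (Hom.ofLE hHG)) (C.valid he) hα hβ
  exact ⟨_, hc'.update_deleteEdges hu hv⟩

end EdgeColoring

section Subdivision

open Sum

variable (G : SimpleGraph V) {k : ℕ}

lemma adj_out (e : G.edgeSet) : G.Adj (Quot.out e.1).1 (Quot.out e.1).2 := by
  rw [← mem_edgeSet, Sym2.mk_out]
  exact e.2

lemma isBipartite_subdivision_two : (G.subdivision 2).IsBipartite := by
  refine ⟨Coloring.mk (fun x => if x.isLeft then 0 else 1) fun {x y} h => ?_⟩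
  rcases x with u | ⟨e, i⟩ <;> rcases y with v | ⟨f, j⟩
  · exact absurd h.1 (by norm_num)
  · simp
  · simp
  · have := h.2
    omega

lemma ncard_neighborSet_subdivision_inl {n : ℕ} (hn : 2 ≤ n) (v : V) :
    ((G.subdivision n).neighborSet (inl v)).ncard = (G.neighborSet v).ncard := by
  classical
  let idx (z : Sym2 V) : Fin (n - 1) :=
    if (Quot.out z).1 = v then ⟨0, by omega⟩ else ⟨n - 2, by omega⟩
  symm
  refine Set.ncard_congr (fun w hw => inr (⟨s(v, w), hw⟩, idx s(v, w))) ?_ ?_ ?_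
  · intro w hw
    by_cases h : (Quot.out s(v, w)).1 = v
    · exact Or.inl ⟨h.symm, by simp [idx, h]⟩
    · refine Or.inr ⟨?_, by simp [idx, h]⟩
      have hv : v ∈ s((Quot.out s(v, w)).1, (Quot.out s(v, w)).2) := by
        rw [Sym2.mk_out]
        exact Sym2.mem_mk_left v w
      exact (Sym2.mem_iff.1 hv).resolve_left (Ne.symm h)
  · intro w w' _ _ h
    exact Sym2.congr_right.1 (congrArg Subtype.val (Prod.ext_iff.1 (inr.inj h)).1)
  · rintro (u | ⟨⟨e, he⟩, i⟩) h
    · exact absurd h.1 (by omega)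
    have hne := G.adj_out ⟨e, he⟩
    rcases h with ⟨hv, hi⟩ | ⟨hv, hi⟩
    · refine ⟨(Quot.out e).2, by rw [hv]; exact hne, ?_⟩
      simp [idx, hv, Sym2.mk_out, Fin.ext_iff, hi]
    · refine ⟨(Quot.out e).1, by rw [hv]; exact hne.symm, ?_⟩
      simp [idx, hv, Sym2.eq_swap, Sym2.mk_out, Fin.ext_iff, hi, hne.ne]

lemma ncard_neighborSet_subdivision_two_inr_le (x : G.edgeSet × Fin (2 - 1)) :
    ((G.subdivision 2).neighborSet (inr x)).ncard ≤ 2 := by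
  have hsub : (G.subdivision 2).neighborSet (inr x) ⊆
      {inl (Quot.out x.1.1).1, inl (Quot.out x.1.1).2} := by
    rintro (u | ⟨f, j⟩) h
    · rcases h with ⟨rfl, -⟩ | ⟨rfl, -⟩ <;> simp
    · have := h.2
      omega
  exact (Set.ncard_le_ncard hsub).trans ((Set.ncard_insert_le _ _).trans (by simp))

lemma exists_isEdgeColoring_subdivision_two [Fintype V] [DecidableRel G.Adj]
    (h : 2 ≤ G.maxDegree) :
    ∃ c : Sym2 (V ⊕ (G.edgeSet × Fin (2 - 1))) → Fin G.maxDegree,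
      (G.subdivision 2).IsEdgeColoring c := by
  have : NeZero G.maxDegree := ⟨by omega⟩
  refine exists_isEdgeColoring_of_isBipartite (isBipartite_subdivision_two G) ?_
  rintro (v | x)
  · rw [ncard_neighborSet_subdivision_inl G le_rfl, ncard_neighborSet_eq_degree]
    exact G.degree_le_maxDegree v
  · exact (ncard_neighborSet_subdivision_two_inr_le G x).trans h

lemma ncard_neighborSet_add_one_le_chromaticNumber [Finite V] {n : ℕ} (hn : 2 ≤ n) (v : V) :
    ((G.neighborSet v).ncard + 1 : ℕ∞) ≤ ((G.subdivision n).power 2).chromaticNumber := by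
  have := ((G.subdivision n).isClique_insert_neighborSet_power_two (inl v)).ncard_le_chromaticNumber
  rwa [Set.ncard_insert_of_notMem (G.subdivision n).notMem_neighborSet_self,
    ncard_neighborSet_subdivision_inl G hn, Nat.cast_add, Nat.cast_one] at this

lemma not_adj_inl_inl_power_two_subdivision {n : ℕ} (hn : 3 ≤ n) (u v : V) :
    ¬((G.subdivision n).power 2).Adj (inl u) (inl v) := by
  rw [power_two_adj]
  rintro ⟨hne, h | ⟨w | ⟨g, l⟩, h₁, h₂⟩⟩
  · exact absurd h.1 (by omega)
  · exact absurd h₁.1 (by omega)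
  · rcases h₁ with ⟨rfl, hl⟩ | ⟨rfl, hl⟩ <;> rcases h₂ with ⟨hv, hl'⟩ | ⟨hv, hl'⟩
    · exact hne (congrArg inl hv.symm)
    · omega
    · omega
    · exact hne (congrArg inl hv.symm)

lemma subdivision_two_adj_of_subdivision_four_adj {w : V} {e : G.edgeSet} {i : Fin (4 - 1)}
    (h : (G.subdivision 4).Adj (inl w) (inr (e, i))) :
    (G.subdivision 2).Adj (inl w) (inr (e, 0)) := by
  rcases h with ⟨rfl, -⟩ | ⟨rfl, -⟩
  · exact Or.inl ⟨rfl, rfl⟩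
  · exact Or.inr ⟨rfl, rfl⟩

/-- `inr (e, 0)` and `inr (e, 2)` are the vertices of `G.subdivision 4` next to the ends
`(Quot.out e).1` and `(Quot.out e).2` of `e`; they take the colours of the corresponding edges of
`G.subdivision 2` at `inr (e, 0)`, shifted by one so that `0` is left to the vertices of `G`. -/
noncomputable def subdivisionFourColor (c : Sym2 (V ⊕ (G.edgeSet × Fin (2 - 1))) → Fin k)
    (mid : G.edgeSet → Fin (k + 1)) : V ⊕ (G.edgeSet × Fin (4 - 1)) → Fin (k + 1)
  | inl _ => 0
  | inr (e, i) =>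
    ![(c s(inl (Quot.out e.1).1, inr (e, 0))).succ, mid e,
      (c s(inl (Quot.out e.1).2, inr (e, 0))).succ] i

variable {G} {c : Sym2 (V ⊕ (G.edgeSet × Fin (2 - 1))) → Fin k} {mid : G.edgeSet → Fin (k + 1)}

lemma subdivisionFourColor_inr_ne_zero (hmid : ∀ e, mid e ≠ 0) (x : G.edgeSet × Fin (4 - 1)) :
    subdivisionFourColor G c mid (inr x) ≠ 0 := by
  obtain ⟨e, i⟩ := x
  fin_cases i
  · exact Fin.succ_ne_zero _
  · exact hmid e
  · exact Fin.succ_ne_zero _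

lemma subdivisionFourColor_of_adj {w : V} {e : G.edgeSet} {i : Fin (4 - 1)}
    (h : (G.subdivision 4).Adj (inl w) (inr (e, i))) :
    subdivisionFourColor G c mid (inr (e, i)) = (c s(inl w, inr (e, 0))).succ := by
  rcases h with ⟨rfl, hi⟩ | ⟨rfl, hi⟩
  · obtain rfl : i = 0 := Fin.ext hi
    rfl
  · obtain rfl : i = 2 := Fin.ext hi
    rfl

lemma subdivisionFourColor_injective_edge (hc : (G.subdivision 2).IsEdgeColoring c)
    (hmid : ∀ e, mid e ≠ (c s(inl (Quot.out e.1).1, inr (e, 0))).succ ∧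
      mid e ≠ (c s(inl (Quot.out e.1).2, inr (e, 0))).succ)
    (e : G.edgeSet) : Function.Injective fun i => subdivisionFourColor G c mid (inr (e, i)) := by
  have hends : c s(inl (Quot.out e.1).1, inr (e, 0)) ≠ c s(inl (Quot.out e.1).2, inr (e, 0)) := by
    rw [Sym2.eq_swap, Sym2.eq_swap (a := inl (Quot.out e.1).2)]
    exact hc (Or.inl ⟨rfl, rfl⟩) (Or.inr ⟨rfl, rfl⟩) (by simpa using (G.adj_out e).ne)
  exact injective_vecThree (hmid e).1.symm ((Fin.succ_injective _).ne hends) (hmid e).2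

lemma subdivisionFourColor_ne_of_adj (hc : (G.subdivision 2).IsEdgeColoring c)
    (hmid₀ : ∀ e, mid e ≠ 0)
    (hmid : ∀ e, mid e ≠ (c s(inl (Quot.out e.1).1, inr (e, 0))).succ ∧
      mid e ≠ (c s(inl (Quot.out e.1).2, inr (e, 0))).succ)
    {x y : V ⊕ (G.edgeSet × Fin (4 - 1))} (h : ((G.subdivision 4).power 2).Adj x y) :
    subdivisionFourColor G c mid x ≠ subdivisionFourColor G c mid y := by
  rcases x with u | ⟨e, i⟩ <;> rcases y with v | ⟨f, j⟩
  · exact absurd h (not_adj_inl_inl_power_two_subdivision G (by norm_num) u v)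
  · exact (subdivisionFourColor_inr_ne_zero hmid₀ _).symm
  · exact subdivisionFourColor_inr_ne_zero hmid₀ _
  obtain ⟨hne, h⟩ := power_two_adj.1 h
  by_cases hef : e = f
  · subst hef
    exact fun heq => hne (by rw [subdivisionFourColor_injective_edge hc hmid e heq])
  rcases h with h | ⟨w | ⟨g, l⟩, h₁, h₂⟩
  · exact absurd h.1 hef
  · rw [subdivisionFourColor_of_adj h₁.symm, subdivisionFourColor_of_adj h₂, Ne, Fin.succ_inj]
    exact hc (subdivision_two_adj_of_subdivision_four_adj G h₁.symm)
      (subdivision_two_adj_of_subdivision_four_adj G h₂) (by simpa using hef)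
  · exact absurd (h₁.1.trans h₂.1) hef

theorem colorable_power_two_subdivision_four (hk : 3 ≤ k)
    (hc : (G.subdivision 2).IsEdgeColoring c) :
    ((G.subdivision 4).power 2).Colorable (k + 1) := by
  have hfree : ∀ a b : Fin (k + 1), ∃ m, m ≠ 0 ∧ m ≠ a ∧ m ≠ b := fun a b => by
    have hcard : ({0, a, b} : Finset _).card < (Finset.univ : Finset (Fin (k + 1))).card :=
      Finset.card_le_three.trans_lt (by simp; omega)
    obtain ⟨m, -, hm⟩ := Finset.exists_mem_notMem_of_card_lt_card hcard
    exact ⟨m, by simpa [not_or] using hm⟩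
  choose mid hmid₀ hmid using fun e : G.edgeSet =>
    hfree (c s(inl (Quot.out e.1).1, inr (e, 0))).succ
      (c s(inl (Quot.out e.1).2, inr (e, 0))).succ
  exact ⟨Coloring.mk (subdivisionFourColor G c mid) fun h =>
    subdivisionFourColor_ne_of_adj hc hmid₀ hmid h⟩

end Subdivision

end SimpleGraph

theorem chromatic_two_fourths_general {V : Type*} [Fintype V] (G : SimpleGraph V)
    [DecidableRel G.Adj] (hΔ : 3 ≤ G.maxDegree) :
    ((G.subdivision 4).power 2).chromaticNumber = ((G.maxDegree + 1 : ℕ) : ℕ∞) := by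
  obtain ⟨c, hc⟩ := exists_isEdgeColoring_subdivision_two G (by omega)
  refine le_antisymm (colorable_power_two_subdivision_four hΔ hc).chromaticNumber_le ?_
  have : Nonempty V := by
    by_contra h
    rw [not_nonempty_iff] at h
    simp at hΔ
  obtain ⟨v, hv⟩ := G.exists_maximal_degree_vertex
  rw [hv, ← ncard_neighborSet_eq_degree, Nat.cast_add, Nat.cast_one]
  exact ncard_neighborSet_add_one_le_chromaticNumber G (by norm_num) v

theorem chromatic_two_fourths {V : Type*} [Fintype V] (G : SimpleGraph V)
    [DecidableRel G.Adj] (hG : G.Connected) (hΔ : 3 ≤ G.maxDegree) :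
    ((G.subdivision 4).power 2).chromaticNumber = ((G.maxDegree + 1 : ℕ) : ℕ∞) :=
  chromatic_two_fourths_general G hΔ
end

section
/- Let G be a connected graph with maximum degree Δ ≥ 3. Then the chromatic number of G^{2/5} (the square of the 5-subdivision of G) equals Δ + 1. -/
open SimpleGraph

/-!
Lower bound: a branch vertex `u` of maximum degree and the `Δ` subdivision vertices next to it are
pairwise at distance at most `2` in `G^{1/5}`, so they form a clique in `G^{2/5}`.

Upper bound: two vertices of `G^{1/5}` at distance at most `2` either lie on the path replacing a
single edge, at distance at most `2` along it, or are both adjacent to a common branch vertex.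
Colour the branch vertices properly with `Δ + 1` colours, give the subdivision vertices next to
each branch vertex `v` pairwise distinct colours different from that of `v`, and finish each path
by colouring its two middle vertices, for which four colours suffice.
-/

theorem exists_ne_of_four_le_card {α : Type*} [Fintype α] (hα : 4 ≤ Fintype.card α) (x y z : α) :
    ∃ c, c ≠ x ∧ c ≠ y ∧ c ≠ z := by
  classical
  obtain ⟨c, -, hc⟩ := Finset.exists_mem_notMem_of_card_lt_card
    (s := {x, y, z}) (t := Finset.univ)
    (Finset.card_le_three.trans_lt (by rw [Finset.card_univ]; omega))
  simp only [Finset.mem_insert, Finset.mem_singleton, not_or] at hc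
  exact ⟨c, hc.1, hc.2.1, hc.2.2⟩

theorem exists_middle_colors_square_proper {α : Type*} [Fintype α] (hα : 4 ≤ Fintype.card α)
    {p q r s : α} (hpq : p ≠ q) (hps : p ≠ s) (hrs : r ≠ s) :
    ∃ a b : α, ∀ i j : Fin 6, (i : ℕ) ≠ j → (i : ℕ) ≤ j + 2 → (j : ℕ) ≤ i + 2 →
      ![p, q, a, b, r, s] i ≠ ![p, q, a, b, r, s] j := by
  -- `b` must avoid `s, q, r, a`; taking `a := s` whenever `s ≠ q` leaves at most three colours
  obtain ⟨a, b, hpa, hqa, hra, hsb, hqb, hrb, hab⟩ :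
      ∃ a b, a ≠ p ∧ a ≠ q ∧ a ≠ r ∧ b ≠ s ∧ b ≠ q ∧ b ≠ r ∧ b ≠ a := by
    by_cases hsq : s = q
    · obtain ⟨a, hap, haq, har⟩ := exists_ne_of_four_le_card hα p q r
      obtain ⟨b, hbq, hbr, hba⟩ := exists_ne_of_four_le_card hα q r a
      exact ⟨a, b, hap, haq, har, hsq ▸ hbq, hbq, hbr, hba⟩
    · obtain ⟨b, hbq, hbr, hbs⟩ := exists_ne_of_four_le_card hα q r s
      exact ⟨s, b, Ne.symm hps, hsq, Ne.symm hrs, hbs, hbq, hbr, hbs⟩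
  refine ⟨a, b, fun i j hij hi hj => ?_⟩
  fin_cases i <;> fin_cases j <;> simp_all [eq_comm]

namespace SimpleGraph

variable {V W α : Type*}

theorem power_two_adj_iff {H : SimpleGraph W} {x y : W} :
    (H.power 2).Adj x y ↔ H.Adj x y ∨ x ≠ y ∧ ∃ z, H.Adj x z ∧ H.Adj z y := by
  constructor
  · rintro ⟨hne, hr, hd⟩
    obtain ⟨p, hp⟩ := hr.exists_walk_length_eq_dist
    rw [← hp] at hd
    match p, hd with
    | .nil, _ => exact absurd rfl hne
    | .cons h .nil, _ => exact .inl h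
    | .cons h (.cons h' .nil), _ => exact .inr ⟨hne, _, h, h'⟩
    | .cons _ (.cons _ (.cons _ _)), hd => simp at hd
  · rintro (h | ⟨hne, z, h, h'⟩)
    · exact ⟨h.ne, h.reachable, (dist_le h.toWalk).trans (by simp)⟩
    · exact ⟨hne, h.reachable.trans h'.reachable, (dist_le (.cons h h'.toWalk)).trans (by simp)⟩

theorem colorable_maxDegree_add_one [Fintype V] (G : SimpleGraph V) [DecidableRel G.Adj] :
    G.Colorable (G.maxDegree + 1) := by
  classical
  suffices ∀ s : Finset V, ∃ c : V → Fin (G.maxDegree + 1),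
      ∀ u ∈ s, ∀ v ∈ s, G.Adj u v → c u ≠ c v by
    obtain ⟨c, hc⟩ := this Finset.univ
    exact ⟨Coloring.mk c fun h => hc _ (Finset.mem_univ _) _ (Finset.mem_univ _) h⟩
  intro s
  induction s using Finset.induction_on with
  | empty => exact ⟨fun _ => 0, by simp⟩
  | insert a s ha ih =>
    obtain ⟨c, hc⟩ := ih
    have hfree : ((G.neighborFinset a).image c).card <
        (Finset.univ : Finset (Fin (G.maxDegree + 1))).card := by
      rw [Finset.card_univ, Fintype.card_fin, Nat.lt_succ_iff]
      exact Finset.card_image_le.trans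
        ((G.card_neighborFinset_eq_degree a).trans_le (G.degree_le_maxDegree a))
    obtain ⟨k, -, hk⟩ := Finset.exists_mem_notMem_of_card_lt_card hfree
    have hk_adj : ∀ v, G.Adj a v → k ≠ c v := fun v h hkv =>
      hk (hkv ▸ Finset.mem_image_of_mem c ((G.mem_neighborFinset a v).2 h))
    have hne : ∀ v ∈ s, v ≠ a := fun v hv hva => ha (hva ▸ hv)
    refine ⟨Function.update c a k, ?_⟩
    simp only [Finset.mem_insert]
    rintro u (rfl | hu) v (rfl | hv) huv
    · exact absurd rfl huv.ne
    · rw [Function.update_self, Function.update_of_ne (hne v hv)]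
      exact hk_adj v huv
    · rw [Function.update_self, Function.update_of_ne (hne u hu)]
      exact (hk_adj u huv.symm).symm
    · rw [Function.update_of_ne (hne u hu), Function.update_of_ne (hne v hv)]
      exact hc u hu v hv huv

theorem exists_neighbor_colors {G : SimpleGraph V} [G.LocallyFinite] [Fintype α]
    (t : V → α) (h : ∀ v, G.degree v < Fintype.card α) :
    ∃ near : V → V → α, ∀ v, (∀ w, G.Adj v w → near v w ≠ t v) ∧
      Set.InjOn (near v) (G.neighborSet v) := by
  classical
  have emb (v : V) : Nonempty (G.neighborSet v ↪ {c // c ≠ t v}) := by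
    refine Function.Embedding.nonempty_of_card_le ?_
    rw [card_neighborSet_eq_degree, Fintype.card_subtype_compl, Fintype.card_subtype_eq]
    have := h v
    omega
  refine ⟨fun v w => if hw : G.Adj v w then (emb v).some ⟨w, hw⟩ else t v,
    fun v => ⟨fun w hw => ?_, fun w hw w' hw' hww' => ?_⟩⟩
  · simpa [hw] using ((emb v).some ⟨w, hw⟩).2
  · simp only [dif_pos (show G.Adj v w from hw), dif_pos (show G.Adj v w' from hw')] at hww'
    exact congrArg Subtype.val ((emb v).some.injective (Subtype.ext hww'))

noncomputable section subdivision

variable {G : SimpleGraph V}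

/-- `SimpleGraph.subdivision` numbers the internal vertices of `e` from `edgeSrc e` to
`edgeTgt e`. -/
def edgeSrc (e : G.edgeSet) : V := (Quot.out e.1).1

def edgeTgt (e : G.edgeSet) : V := (Quot.out e.1).2

theorem mk_edgeSrc_edgeTgt (e : G.edgeSet) : s(edgeSrc e, edgeTgt e) = e := Quot.out_eq _

theorem adj_edgeSrc_edgeTgt (e : G.edgeSet) : G.Adj (edgeSrc e) (edgeTgt e) := by
  rw [← mem_edgeSet, mk_edgeSrc_edgeTgt]
  exact e.2

theorem edgeSrc_ne_edgeTgt (e : G.edgeSet) : edgeSrc e ≠ edgeTgt e :=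
  (adj_edgeSrc_edgeTgt e).ne

variable {n : ℕ}

theorem subdivision_adj_inl_inl {u v : V} :
    (G.subdivision n).Adj (.inl u) (.inl v) ↔ n = 1 ∧ G.Adj u v := Iff.rfl

theorem subdivision_adj_inl_inr {u : V} {e : G.edgeSet} {i : Fin (n - 1)} :
    (G.subdivision n).Adj (.inl u) (.inr (e, i)) ↔
      u = edgeSrc e ∧ (i : ℕ) = 0 ∨ u = edgeTgt e ∧ (i : ℕ) = n - 2 := Iff.rfl

theorem subdivision_adj_inr_inr {e f : G.edgeSet} {i j : Fin (n - 1)} :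
    (G.subdivision n).Adj (.inr (e, i)) (.inr (f, j)) ↔
      e = f ∧ ((i : ℕ) + 1 = j ∨ (j : ℕ) + 1 = i) := Iff.rfl

theorem eq_of_subdivision_adj_inl_inr {v : V} {e : G.edgeSet} {i j : Fin (n - 1)}
    (hi : (G.subdivision n).Adj (.inl v) (.inr (e, i)))
    (hj : (G.subdivision n).Adj (.inl v) (.inr (e, j))) : i = j := by
  have := edgeSrc_ne_edgeTgt e
  rw [subdivision_adj_inl_inr] at hi hj
  ext
  rcases hi with ⟨rfl, hi⟩ | ⟨rfl, hi⟩ <;> rcases hj with ⟨hv, hj⟩ | ⟨hv, hj⟩ <;> grind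

open Classical in
def subdivisionVertexNear (m : ℕ) (v : V) (e : G.edgeSet) : V ⊕ (G.edgeSet × Fin (m + 2 - 1)) :=
  .inr (e, if v = edgeSrc e then ⟨0, by omega⟩ else ⟨m, by omega⟩)

theorem subdivision_adj_subdivisionVertexNear (m : ℕ) {v : V} {e : G.edgeSet}
    (hv : v ∈ (e : Sym2 V)) :
    (G.subdivision (m + 2)).Adj (.inl v) (subdivisionVertexNear m v e) := by
  rw [subdivisionVertexNear, subdivision_adj_inl_inr]
  split_ifs with h
  · exact .inl ⟨h, rfl⟩
  · rw [← mk_edgeSrc_edgeTgt e, Sym2.mem_iff] at hv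
    exact .inr ⟨hv.resolve_left h, by simp⟩

theorem degree_add_one_le_chromaticNumber_power_two_subdivision [G.LocallyFinite] (m : ℕ)
    (u : V) :
    ((G.degree u + 1 : ℕ) : ℕ∞) ≤ ((G.subdivision (m + 2)).power 2).chromaticNumber := by
  let f : Option (G.neighborSet u) → V ⊕ (G.edgeSet × Fin (m + 2 - 1)) :=
    fun o => o.elim (.inl u) fun w => subdivisionVertexNear m u ⟨s(u, w), w.2⟩
  have hf : ∀ w, (G.subdivision (m + 2)).Adj (.inl u) (f (some w)) := fun w =>
    subdivision_adj_subdivisionVertexNear m (Sym2.mem_mk_left u w)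
  refine le_chromaticNumber_of_pairwise_adj
    (by rw [Nat.card_eq_fintype_card, Fintype.card_option, card_neighborSet_eq_degree]) f ?_
  rintro (_ | w) (_ | w') hww'
  · exact absurd rfl hww'
  · exact power_two_adj_iff.2 (.inl (hf w'))
  · exact power_two_adj_iff.2 (.inl (hf w).symm)
  · refine power_two_adj_iff.2 (.inr ⟨fun h => hww' ?_, _, (hf w).symm, hf w'⟩)
    simp only [f, Option.elim, subdivisionVertexNear, Sum.inr.injEq, Prod.mk.injEq] at h
    exact congrArg some (Subtype.ext (Sym2.congr_right.1 (congrArg Subtype.val h.1)))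

end subdivision

noncomputable section subdivisionFive

variable {G : SimpleGraph V}

def subdivisionFivePath (e : G.edgeSet) : Fin 6 → V ⊕ (G.edgeSet × Fin (5 - 1)) :=
  ![.inl (edgeSrc e), .inr (e, (0 : Fin 4)), .inr (e, (1 : Fin 4)), .inr (e, (2 : Fin 4)),
    .inr (e, (3 : Fin 4)), .inl (edgeTgt e)]

theorem subdivisionFivePath_succ_castSucc (e : G.edgeSet) (k : Fin 4) :
    subdivisionFivePath e k.succ.castSucc = .inr (e, k) := by
  fin_cases k <;> rfl

theorem exists_subdivisionFivePath_of_adj_inr {x : V ⊕ (G.edgeSet × Fin (5 - 1))}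
    {e : G.edgeSet} {k : Fin 4} (h : (G.subdivision 5).Adj x (.inr (e, k))) :
    ∃ j : Fin 6, x = subdivisionFivePath e j ∧ ((j : ℕ) = k ∨ (j : ℕ) = k + 2) := by
  rcases x with u | ⟨f, i⟩
  · rcases subdivision_adj_inl_inr.1 h with ⟨rfl, hk⟩ | ⟨rfl, hk⟩
    · exact ⟨0, rfl, by omega⟩
    · exact ⟨5, rfl, by omega⟩
  · obtain ⟨rfl, hik⟩ := subdivision_adj_inr_inr.1 h
    exact ⟨i.succ.castSucc, (subdivisionFivePath_succ_castSucc f i).symm, by simp; omega⟩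

theorem subdivision_five_power_two_adj_cases {x y : V ⊕ (G.edgeSet × Fin (5 - 1))}
    (h : ((G.subdivision 5).power 2).Adj x y) :
    (∃ e i j, x = subdivisionFivePath e i ∧ y = subdivisionFivePath e j ∧
      (i : ℕ) ≠ j ∧ (i : ℕ) ≤ j + 2 ∧ (j : ℕ) ≤ i + 2) ∨
    ∃ v, (G.subdivision 5).Adj (.inl v) x ∧ (G.subdivision 5).Adj (.inl v) y := by
  rcases power_two_adj_iff.1 h with hxy | ⟨hne, z, hxz, hzy⟩
  · left
    rcases y with v | ⟨e, k⟩
    · rcases x with u | ⟨e, k⟩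
      · exact absurd (subdivision_adj_inl_inl.1 hxy).1 (by norm_num)
      obtain ⟨j, hj_eq, hj⟩ := exists_subdivisionFivePath_of_adj_inr hxy.symm
      exact ⟨e, k.succ.castSucc, j, (subdivisionFivePath_succ_castSucc e k).symm, hj_eq,
        by simp; omega⟩
    · obtain ⟨j, rfl, hj⟩ := exists_subdivisionFivePath_of_adj_inr hxy
      exact ⟨e, j, k.succ.castSucc, rfl, (subdivisionFivePath_succ_castSucc e k).symm,
        by simp; omega⟩
  · rcases z with v | ⟨e, k⟩
    · exact .inr ⟨v, hxz.symm, hzy⟩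
    · obtain ⟨i, rfl, hi⟩ := exists_subdivisionFivePath_of_adj_inr hxz
      obtain ⟨j, rfl, hj⟩ := exists_subdivisionFivePath_of_adj_inr hzy.symm
      have hij : (i : ℕ) ≠ j := fun h => hne (congrArg _ (Fin.ext h))
      exact .inl ⟨e, i, j, rfl, rfl, hij, by omega, by omega⟩

end subdivisionFive

noncomputable section subdivisionFiveColor

variable {G : SimpleGraph V} (t : V → α) (near : V → V → α) (a b : G.edgeSet → α)

def subdivisionFiveColor : V ⊕ (G.edgeSet × Fin (5 - 1)) → α
  | .inl v => t v
  | .inr (e, i) => ![near (edgeSrc e) (edgeTgt e), a e, b e, near (edgeTgt e) (edgeSrc e)] i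

theorem subdivisionFiveColor_comp_subdivisionFivePath (e : G.edgeSet) :
    subdivisionFiveColor t near a b ∘ subdivisionFivePath e = ![t (edgeSrc e),
      near (edgeSrc e) (edgeTgt e), a e, b e, near (edgeTgt e) (edgeSrc e), t (edgeTgt e)] := by
  funext j
  fin_cases j <;> rfl

theorem exists_subdivisionFiveColor_eq_of_adj_inl {v : V} {e : G.edgeSet} {i : Fin (5 - 1)}
    (h : (G.subdivision 5).Adj (.inl v) (.inr (e, i))) :
    ∃ w, G.Adj v w ∧ (e : Sym2 V) = s(v, w) ∧
      subdivisionFiveColor t near a b (.inr (e, i)) = near v w := by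
  rcases subdivision_adj_inl_inr.1 h with ⟨rfl, hi⟩ | ⟨rfl, hi⟩
  · obtain rfl : i = 0 := Fin.ext hi
    exact ⟨edgeTgt e, adj_edgeSrc_edgeTgt e, (mk_edgeSrc_edgeTgt e).symm, rfl⟩
  · obtain rfl : i = 3 := Fin.ext hi
    exact ⟨edgeSrc e, (adj_edgeSrc_edgeTgt e).symm,
      by rw [Sym2.eq_swap, mk_edgeSrc_edgeTgt], rfl⟩

variable {t near a b}

theorem subdivisionFiveColor_ne_of_adj_inl (hnear : ∀ v, Set.InjOn (near v) (G.neighborSet v))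
    {v : V} {x y : V ⊕ (G.edgeSet × Fin (5 - 1))} (hx : (G.subdivision 5).Adj (.inl v) x)
    (hy : (G.subdivision 5).Adj (.inl v) y) (hxy : x ≠ y) :
    subdivisionFiveColor t near a b x ≠ subdivisionFiveColor t near a b y := by
  rcases x with u | ⟨e, i⟩
  · exact absurd (subdivision_adj_inl_inl.1 hx).1 (by norm_num)
  rcases y with u | ⟨f, j⟩
  · exact absurd (subdivision_adj_inl_inl.1 hy).1 (by norm_num)
  obtain ⟨w, hw, he, hcx⟩ := exists_subdivisionFiveColor_eq_of_adj_inl t near a b hx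
  obtain ⟨w', hw', hf, hcy⟩ := exists_subdivisionFiveColor_eq_of_adj_inl t near a b hy
  rw [hcx, hcy]
  intro hww'
  obtain rfl := hnear v hw hw' hww'
  obtain rfl : e = f := Subtype.ext (he.trans hf.symm)
  exact hxy (by rw [eq_of_subdivision_adj_inl_inr hx hy])

end subdivisionFiveColor

theorem colorable_power_two_subdivision_five [Fintype V] {G : SimpleGraph V} [DecidableRel G.Adj]
    (hΔ : 3 ≤ G.maxDegree) : ((G.subdivision 5).power 2).Colorable (G.maxDegree + 1) := by
  obtain ⟨t⟩ := G.colorable_maxDegree_add_one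
  obtain ⟨near, hnear⟩ := exists_neighbor_colors (G := G) t fun v => by
    simpa [Nat.lt_succ_iff] using G.degree_le_maxDegree v
  have hcard : 4 ≤ Fintype.card (Fin (G.maxDegree + 1)) := by simpa using hΔ
  choose a b hab using fun e : G.edgeSet => exists_middle_colors_square_proper hcard
    ((hnear _).1 _ (adj_edgeSrc_edgeTgt e)).symm (t.valid (adj_edgeSrc_edgeTgt e))
    ((hnear _).1 _ (adj_edgeSrc_edgeTgt e).symm)
  refine ⟨Coloring.mk (subdivisionFiveColor t near a b) fun h => ?_⟩
  rcases subdivision_five_power_two_adj_cases h with ⟨e, i, j, rfl, rfl, hij⟩ | ⟨v, hx, hy⟩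
  · have := hab e i j hij.1 hij.2.1 hij.2.2
    rwa [← subdivisionFiveColor_comp_subdivisionFivePath] at this
  · exact subdivisionFiveColor_ne_of_adj_inl (fun v => (hnear v).2) hx hy h.ne

end SimpleGraph

theorem chromatic_two_fifths_general {V : Type*} [Fintype V] (G : SimpleGraph V)
    [DecidableRel G.Adj] (hΔ : 3 ≤ G.maxDegree) :
    ((G.subdivision 5).power 2).chromaticNumber = ((G.maxDegree + 1 : ℕ) : ℕ∞) := by
  rcases isEmpty_or_nonempty V with _ | _
  · simp at hΔ
  obtain ⟨u, hu⟩ := G.exists_maximal_degree_vertex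
  refine le_antisymm (colorable_power_two_subdivision_five hΔ).chromaticNumber_le ?_
  rw [hu]
  exact G.degree_add_one_le_chromaticNumber_power_two_subdivision 3 u

theorem chromatic_two_fifths {V : Type*} [Fintype V] (G : SimpleGraph V)
    [DecidableRel G.Adj] (hG : G.Connected) (hΔ : 3 ≤ G.maxDegree) :
    ((G.subdivision 5).power 2).chromaticNumber = ((G.maxDegree + 1 : ℕ) : ℕ∞) :=
  chromatic_two_fifths_general G hΔ
end
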